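/- arXiv:1504.05225 — 4 statements merged into one kernel-verified Lean document; each statement's English description precedes it below -/
import Mathlib

section
/- The function h(y) = y − 1 + η(y)³/(8y³) is strictly increasing on (2, ∞), where η(y) is the distance from y to the nearest integer. -/
/-!
Write η(y) = |y - round y|. This is 1-Lipschitz and bounded by 1/2, so on [0, 1/2] the cube
η³ is 3/4-Lipschitz, while y ↦ 1 / y³ is 3/16-Lipschitz and bounded by 1/8 on [2, ∞).
Hence the perturbation η(y)³ / (8y³) is Lipschitz with constant 15/1024 < 1 there and
cannot cancel the increase of y - 1.
-/

lemma min_sub_floor_ceil_sub_eq_abs_sub_round (y : ℝ) :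
    min (y - ⌊y⌋) (⌈y⌉ - y) = |y - round y| := by
  rw [abs_sub_round_eq_min, ← Int.self_sub_floor]
  rcases Int.fract_eq_zero_or_add_one_sub_ceil y with h | h
  · obtain ⟨z, rfl⟩ := Int.fract_eq_zero_iff.1 h
    simp
  · rw [← Int.self_sub_floor] at h
    congr 1; linarith

lemma abs_sub_round_le_add_abs_sub (x y : ℝ) : |x - round x| ≤ |y - round y| + |x - y| :=
  calc |x - round x| ≤ |x - round y| := round_le x (round y)
    _ = |(x - y) + (y - round y)| := by ring_nf
    _ ≤ |y - round y| + |x - y| := by rw [add_comm |y - _|]; exact abs_add_le _ _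

lemma pow_three_sub_pow_three_le_of_le_add {u v d : ℝ} (hu : 0 ≤ u) (hv : 0 ≤ v)
    (hu' : u ≤ 1 / 2) (hv' : v ≤ 1 / 2) (hd : 0 ≤ d) (huv : u ≤ v + d) :
    u ^ 3 - v ^ 3 ≤ 3 / 4 * d := by
  rcases le_total u v with h | h
  · nlinarith [pow_le_pow_left₀ hu h 3]
  · have hsq : u ^ 2 + u * v + v ^ 2 ≤ 3 / 4 := by nlinarith
    calc u ^ 3 - v ^ 3 = (u - v) * (u ^ 2 + u * v + v ^ 2) := by ring
      _ ≤ d * (3 / 4) := by gcongr; linarith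
      _ = 3 / 4 * d := mul_comm _ _

lemma inv_pow_three_sub_inv_pow_three_le {a b : ℝ} (ha : 2 ≤ a) (hab : a ≤ b) :
    (a ^ 3)⁻¹ - (b ^ 3)⁻¹ ≤ 3 / 16 * (b - a) := by
  have hb : 2 ≤ b := ha.trans hab
  have h4a : 4 ≤ a ^ 2 := by nlinarith
  have h4b : 4 ≤ b ^ 2 := by nlinarith
  have hsum : a ^ 2 + a * b + b ^ 2 ≤ 3 / 16 * (a ^ 3 * b ^ 3) := by
    nlinarith [mul_le_mul h4a h4b (by norm_num) (by positivity),
      mul_le_mul ha hb (by norm_num) (by positivity)]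
  rw [inv_sub_inv (by positivity) (by positivity), div_le_iff₀ (by positivity)]
  calc b ^ 3 - a ^ 3 = (b - a) * (a ^ 2 + a * b + b ^ 2) := by ring
    _ ≤ (b - a) * (3 / 16 * (a ^ 3 * b ^ 3)) := by gcongr
    _ = _ := by ring

lemma pow_three_div_sub_pow_three_div_lt {a b u v : ℝ} (ha : 2 ≤ a) (hab : a < b)
    (hu : 0 ≤ u) (hv : 0 ≤ v) (hu' : u ≤ 1 / 2) (hv' : v ≤ 1 / 2) (huv : u ≤ v + (b - a)) :
    u ^ 3 / (8 * a ^ 3) - v ^ 3 / (8 * b ^ 3) < b - a := by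
  have hba : 0 < b - a := sub_pos.2 hab
  have ha3 : 8 ≤ a ^ 3 := by linarith [pow_le_pow_left₀ (by norm_num) ha 3]
  have hcube := pow_three_sub_pow_three_le_of_le_add hu hv hu' hv' hba.le huv
  have hinv := inv_pow_three_sub_inv_pow_three_le ha hab.le
  have hinv0 : 0 ≤ (a ^ 3)⁻¹ - (b ^ 3)⁻¹ :=
    sub_nonneg.2 (inv_anti₀ (by positivity) (pow_le_pow_left₀ (by linarith) hab.le 3))
  have hv3 : v ^ 3 ≤ 1 / 8 := by linarith [pow_le_pow_left₀ hv hv' 3]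
  have ha3inv : (a ^ 3)⁻¹ ≤ 1 / 8 := by rw [inv_le_comm₀ (by positivity) (by norm_num)]; linarith
  calc u ^ 3 / (8 * a ^ 3) - v ^ 3 / (8 * b ^ 3)
        = (u ^ 3 - v ^ 3) * (a ^ 3)⁻¹ / 8 + v ^ 3 * ((a ^ 3)⁻¹ - (b ^ 3)⁻¹) / 8 := by ring
    _ ≤ (3 / 4 * (b - a)) * (a ^ 3)⁻¹ / 8 + 1 / 8 * (3 / 16 * (b - a)) / 8 := by gcongr
    _ ≤ (3 / 4 * (b - a)) * (1 / 8) / 8 + 1 / 8 * (3 / 16 * (b - a)) / 8 := by gcongr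
    _ < b - a := by linarith

theorem stmt_6 :
    StrictMonoOn
      (fun y : ℝ => y - 1 + (min (y - ⌊y⌋) (⌈y⌉ - y)) ^ 3 / (8 * y ^ 3))
      (Set.Ioi (2 : ℝ)) := by
  intro a ha b _ hab
  simp only [min_sub_floor_ceil_sub_eq_abs_sub_round]
  have hlip : |a - round a| ≤ |b - round b| + (b - a) := by
    simpa [abs_sub_comm a b, abs_of_pos (sub_pos.2 hab)] using abs_sub_round_le_add_abs_sub a b
  have hpert := pow_three_div_sub_pow_three_div_lt (le_of_lt ha) hab (abs_nonneg _) (abs_nonneg _)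
    (abs_sub_round a) (abs_sub_round b) hlip
  linarith
end

section
/- Let G be a finite connected graph with n vertices, average degree μ = (1/n)∑_v deg(v) ≥ 2 and minimum degree at least 2. Then the geometric-mean quantity Λ(G) = ∏_{v ∈ V(G)} (deg(v) − 1)^{deg(v)/(nμ)} satisfies Λ(G) ≥ μ − 1. -/
/-!
Taking logarithms, `log Λ(G) = (∑ᵥ f (deg v)) / (nμ)` with `f x = x * log (x - 1)`.
On `[2, ∞)` we have `f'' x = (x - 2) / (x - 1) ^ 2 ≥ 0`, so by Jensen's inequality for the
uniform average of the degrees, `∑ᵥ f (deg v) ≥ n f μ = nμ log (μ - 1)`.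
-/

open Real Finset

lemma hasDerivAt_mul_log_sub_one {x : ℝ} (hx : 1 < x) :
    HasDerivAt (fun y => y * log (y - 1)) (log (x - 1) + x / (x - 1)) x := by
  have hlog := ((hasDerivAt_id' x).sub_const 1).log (by linarith)
  exact ((hasDerivAt_id' x).mul hlog).congr_deriv (by ring)

lemma hasDerivAt_log_sub_one_add_div {x : ℝ} (hx : 1 < x) :
    HasDerivAt (fun y => log (y - 1) + y / (y - 1)) ((x - 2) / (x - 1) ^ 2) x := by
  have hx1 : x - 1 ≠ 0 := by linarith
  have hsub := (hasDerivAt_id' x).sub_const 1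
  exact ((hsub.log hx1).add ((hasDerivAt_id' x).div hsub hx1)).congr_deriv
    (by field_simp; ring)

lemma convexOn_mul_log_sub_one : ConvexOn ℝ (Set.Ici 2) (fun x : ℝ => x * log (x - 1)) := by
  refine convexOn_of_hasDerivWithinAt2_nonneg (convex_Ici 2)
    (f' := fun x => log (x - 1) + x / (x - 1)) (f'' := fun x => (x - 2) / (x - 1) ^ 2)
    ?_ ?_ ?_ ?_
  · intro x (hx : 2 ≤ x)
    exact (hasDerivAt_mul_log_sub_one (by linarith)).continuousAt.continuousWithinAt
  all_goals simp only [interior_Ici, Set.mem_Ioi]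
  · exact fun x hx => (hasDerivAt_mul_log_sub_one (by linarith)).hasDerivWithinAt
  · exact fun x hx => (hasDerivAt_log_sub_one_add_div (by linarith)).hasDerivWithinAt
  · exact fun x hx => div_nonneg (by linarith) (sq_nonneg _)

theorem sum_mul_log_mean_sub_one_le {ι : Type*} [Fintype ι] [Nonempty ι] {d : ι → ℝ}
    (hd : ∀ i, 2 ≤ d i) :
    (∑ i, d i) * log ((∑ i, d i) / Fintype.card ι - 1) ≤ ∑ i, d i * log (d i - 1) := by
  have hn : (0 : ℝ) < Fintype.card ι := by exact_mod_cast Fintype.card_pos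
  have hJensen := convexOn_mul_log_sub_one.map_sum_le (t := univ)
    (w := fun _ => 1 / (Fintype.card ι : ℝ)) (p := d) (fun _ _ => by positivity) (by simp)
    (fun i _ => hd i)
  simp only [smul_eq_mul, ← mul_sum] at hJensen
  rw [one_div_mul_eq_div, one_div_mul_eq_div, div_mul_eq_mul_div] at hJensen
  exact (div_le_div_iff_of_pos_right hn).1 hJensen

theorem mean_sub_one_le_prod_rpow {ι : Type*} [Fintype ι] [Nonempty ι] {d : ι → ℝ}
    (hd : ∀ i, 2 ≤ d i) {μ : ℝ} (hμ : μ = (∑ i, d i) / Fintype.card ι) :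
    μ - 1 ≤ ∏ i, (d i - 1) ^ (d i / (Fintype.card ι * μ)) := by
  have hn : (0 : ℝ) < Fintype.card ι := by exact_mod_cast Fintype.card_pos
  have hsum : Fintype.card ι * μ = ∑ i, d i := by rw [hμ]; field_simp
  have hsum_pos : 0 < ∑ i, d i := sum_pos (fun i _ => by linarith [hd i]) univ_nonempty
  have hμ2 : 2 ≤ μ := by
    rw [hμ, le_div_iff₀ hn]
    simpa [mul_comm] using sum_le_sum fun i (_ : i ∈ univ) => hd i
  have hJensen := sum_mul_log_mean_sub_one_le hd
  rw [← hμ] at hJensen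
  rw [hsum]
  calc μ - 1 = exp (log (μ - 1)) := (exp_log (by linarith)).symm
    _ ≤ exp ((∑ i, d i * log (d i - 1)) / ∑ i, d i) := by
      gcongr
      rw [le_div_iff₀ hsum_pos, mul_comm]
      exact hJensen
    _ = exp (∑ i, log (d i - 1) * (d i / ∑ i, d i)) := by
      rw [sum_div]
      exact congrArg exp (sum_congr rfl fun i _ => by ring)
    _ = ∏ i, (d i - 1) ^ (d i / ∑ i, d i) := by
      rw [exp_sum]
      exact prod_congr rfl fun i _ => (rpow_def_of_pos (by linarith [hd i]) _).symm

theorem stmt_7_general {V : Type*} [Fintype V] [Nonempty V] (G : SimpleGraph V)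
    [DecidableRel G.Adj] (hmin : ∀ v, 2 ≤ G.degree v)
    (μ : ℝ) (hμdef : μ = (∑ v, (G.degree v : ℝ)) / (Fintype.card V : ℝ)) :
    μ - 1 ≤ ∏ v, ((G.degree v : ℝ) - 1) ^
      ((G.degree v : ℝ) / ((Fintype.card V : ℝ) * μ)) :=
  mean_sub_one_le_prod_rpow (fun v => by exact_mod_cast hmin v) hμdef

theorem stmt_7 {V : Type*} [Fintype V] [Nonempty V] (G : SimpleGraph V)
    [DecidableRel G.Adj] (hconn : G.Connected) (hmin : ∀ v, 2 ≤ G.degree v)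
    (μ : ℝ) (hμdef : μ = (∑ v, (G.degree v : ℝ)) / (Fintype.card V : ℝ))
    (hμ2 : 2 ≤ μ) :
    μ - 1 ≤ ∏ v, ((G.degree v : ℝ) - 1) ^
      ((G.degree v : ℝ) / ((Fintype.card V : ℝ) * μ)) :=
  stmt_7_general G hmin μ hμdef
end

section
/- Let (a_r)_{r≥1} be any sequence of positive integers. Then there exists a nondecreasing unbounded sequence (t_k) of positive integers such that t_{a_k} ≤ √k for each k ≥ 1 and lim_{n→∞} t_{n+1}/∑_{i=1}^n t_i = 0. -/
/-!
Let `m n` be the least `k ≥ 1` with `n ≤ max (a k) k` and put `t n = ⌊√(m n)⌋`: the values `⌊√r⌋`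
are listed in order, and `⌊√r⌋` is not exceeded before position `max (a r) r`, so `t (a k) ≤ √k`.
The index `m` is monotone and unbounded, as only the finitely many `k < K` can have `m n = k`, and
only for `n ≤ max (a k) k`. Since `m n ≤ n`, we have `t (n + 1) ≤ n + 1`, while `t → ∞` makes the
partial sums grow faster than any multiple of `n`; so their ratio tends to `0`.
-/

open Filter Finset

theorem tendsto_sum_Icc_div_atTop {u : ℕ → ℝ} (h0 : ∀ n, 0 ≤ u n)
    (hu : Tendsto u atTop atTop) :
    Tendsto (fun n : ℕ => (∑ i ∈ Icc 1 n, u i) / (n + 1)) atTop atTop := by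
  refine tendsto_atTop.2 fun K => ?_
  set c := max K 0
  obtain ⟨N, hN⟩ := tendsto_atTop_atTop.1 hu (2 * c)
  filter_upwards [eventually_ge_atTop (2 * N + 1)] with n hn
  have hcard : (n + 1 : ℝ) ≤ 2 * #(Icc (N + 1) n) := by
    rw [Nat.card_Icc]
    exact_mod_cast (by omega : n + 1 ≤ 2 * (n + 1 - (N + 1)))
  have htail : ∑ i ∈ Icc (N + 1) n, u i ≤ ∑ i ∈ Icc 1 n, u i :=
    sum_le_sum_of_subset_of_nonneg (Icc_subset_Icc_left (by omega)) fun i _ _ => h0 i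
  rw [le_div_iff₀ (by positivity)]
  calc K * (n + 1) ≤ c * (n + 1) := by gcongr; exact le_max_left K 0
    _ ≤ c * (2 * #(Icc (N + 1) n)) := by gcongr
    _ = ∑ _i ∈ Icc (N + 1) n, 2 * c := by rw [sum_const, nsmul_eq_mul]; ring
    _ ≤ ∑ i ∈ Icc (N + 1) n, u i := sum_le_sum fun i hi => hN i (N.le_succ.trans (mem_Icc.1 hi).1)
    _ ≤ ∑ i ∈ Icc 1 n, u i := htail

theorem tendsto_div_sum_Icc_nhds_zero {u : ℕ → ℝ} (h0 : ∀ n, 0 ≤ u n)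
    (hle : ∀ n : ℕ, u (n + 1) ≤ n + 1) (hu : Tendsto u atTop atTop) :
    Tendsto (fun n => u (n + 1) / ∑ i ∈ Icc 1 n, u i) atTop (nhds 0) := by
  have hsum (n : ℕ) : 0 ≤ ∑ i ∈ Icc 1 n, u i := sum_nonneg fun i _ => h0 i
  refine squeeze_zero (fun n => div_nonneg (h0 _) (hsum n)) (fun n => ?_)
    (tendsto_sum_Icc_div_atTop h0 hu).inv_tendsto_atTop
  rw [Pi.inv_apply, inv_div]
  exact div_le_div_of_nonneg_right (hle n) (hsum n)

/-- The maximum with `k` makes the defining set nonempty and forces `leastIndexReaching a n ≤ n`. -/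
noncomputable def leastIndexReaching (a : ℕ → ℕ) (n : ℕ) : ℕ :=
  sInf {k | 1 ≤ k ∧ n ≤ max (a k) k}

section leastIndexReaching

variable {a : ℕ → ℕ}

theorem leastIndexReaching_mem (a : ℕ → ℕ) (n : ℕ) :
    1 ≤ leastIndexReaching a n ∧ n ≤ max (a (leastIndexReaching a n)) (leastIndexReaching a n) :=
  Nat.sInf_mem (s := {k | 1 ≤ k ∧ n ≤ max (a k) k}) ⟨max n 1, by simp, by simp⟩

theorem leastIndexReaching_le {n k : ℕ} (hk : 1 ≤ k) (h : n ≤ max (a k) k) :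
    leastIndexReaching a n ≤ k :=
  Nat.sInf_le ⟨hk, h⟩

theorem leastIndexReaching_le_self {n : ℕ} (hn : 1 ≤ n) : leastIndexReaching a n ≤ n :=
  leastIndexReaching_le hn (le_max_right _ _)

theorem monotone_leastIndexReaching (a : ℕ → ℕ) : Monotone (leastIndexReaching a) :=
  fun _ _ hmn => leastIndexReaching_le (leastIndexReaching_mem a _).1
    (hmn.trans (leastIndexReaching_mem a _).2)

theorem tendsto_leastIndexReaching_atTop (a : ℕ → ℕ) :
    Tendsto (leastIndexReaching a) atTop atTop := by
  refine tendsto_atTop.2 fun K => ?_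
  filter_upwards [(range K).eventually_all.2 fun k _ => eventually_gt_atTop (max (a k) k)]
    with n hn
  by_contra! hlt
  exact (hn _ (mem_range.2 hlt)).not_ge (leastIndexReaching_mem a n).2

end leastIndexReaching

theorem tendsto_nat_sqrt_atTop : Tendsto Nat.sqrt atTop atTop :=
  tendsto_atTop.2 fun K => (eventually_ge_atTop (K * K)).mono fun _ h => Nat.le_sqrt.2 h

theorem stmt_15_general (a : ℕ → ℕ) :
    ∃ t : ℕ → ℕ,
      (∀ k l, k ≤ l → t k ≤ t l) ∧
      Tendsto (fun k => t k) atTop atTop ∧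
      (∀ k, 0 < t k) ∧
      (∀ k, 1 ≤ k → (t (a k) : ℝ) ≤ Real.sqrt k) ∧
      Tendsto (fun n => (t (n + 1) : ℝ) / ∑ i ∈ Finset.Icc 1 n, (t i : ℝ))
        atTop (nhds 0) := by
  set t := fun n => Nat.sqrt (leastIndexReaching a n)
  have htop : Tendsto t atTop atTop :=
    tendsto_nat_sqrt_atTop.comp (tendsto_leastIndexReaching_atTop a)
  have hle (n : ℕ) : (t (n + 1) : ℝ) ≤ n + 1 := by
    exact_mod_cast (Nat.sqrt_le_self _).trans (leastIndexReaching_le_self n.succ_pos)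
  refine ⟨t, fun k l hkl => Nat.sqrt_le_sqrt (monotone_leastIndexReaching a hkl), htop,
    fun k => Nat.sqrt_pos.2 (leastIndexReaching_mem a k).1, fun k hk => ?_,
    tendsto_div_sum_Icc_nhds_zero (fun n => Nat.cast_nonneg _) hle
      (tendsto_natCast_atTop_atTop.comp htop)⟩
  calc (t (a k) : ℝ) ≤ Nat.sqrt k := by
        exact_mod_cast Nat.sqrt_le_sqrt (leastIndexReaching_le hk (le_max_left _ _))
    _ ≤ Real.sqrt k := Real.nat_sqrt_le_real_sqrt

theorem stmt_15 (a : ℕ → ℕ) (ha : ∀ r, 1 ≤ r → 0 < a r) :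
    ∃ t : ℕ → ℕ,
      (∀ k l, k ≤ l → t k ≤ t l) ∧
      Tendsto (fun k => t k) atTop atTop ∧
      (∀ k, 0 < t k) ∧
      (∀ k, 1 ≤ k → (t (a k) : ℝ) ≤ Real.sqrt k) ∧
      Tendsto (fun n => (t (n + 1) : ℝ) / ∑ i ∈ Finset.Icc 1 n, (t i : ℝ))
        atTop (nhds 0) :=
  stmt_15_general a
end

section
/- Let 1 < λ₀ < λ₁ and let (t_i) be a positive integer sequence with t_i → ∞ and t_{ℓ+1}/T_ℓ → 0 where T_ℓ = ∑_{i=1}^ℓ t_i. Suppose c > 0. Then for all sufficiently large ℓ: λ₁^{(1 + t_{ℓ+1}/T_ℓ)·T_ℓ} · ∏_{i=1}^{ℓ+1} (t_i^{5/2}/c)·(λ₀/λ₁)^{t_i} ≤ λ₂^{T_ℓ} for any fixed λ₂ > λ₁. -/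
/-!
The factors `t^{5/2}/c · (λ₀/λ₁)^t` tend to `0` because `t_i → ∞`, so all but finitely many of
them are at most `1` and the partial products are bounded by a constant `C`. Writing
`s = t_{ℓ+1}` and `T = T_ℓ`, the left-hand side is at most `λ₁^T · λ₁^s · C`, and
`λ₁^s · C ≤ (λ₂/λ₁)^T` eventually: on a logarithmic scale this is
`s log λ₁ + log C ≤ T log (λ₂/λ₁)`, which holds for large `ℓ` since `s/T → 0` and `T → ∞`.
-/

open Filter Topology Real

theorem tendsto_rpow_mul_pow_of_lt_one (s : ℝ) {r : ℝ} (hr : 0 ≤ r) (h'r : r < 1) :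
    Tendsto (fun n : ℕ => (n : ℝ) ^ s * r ^ n) atTop (𝓝 0) := by
  refine tendsto_of_tendsto_of_tendsto_of_le_of_le' tendsto_const_nhds
    (tendsto_pow_const_mul_const_pow_of_lt_one ⌈s⌉₊ hr h'r) (Eventually.of_forall ?_) ?_
  · intro n
    positivity
  · filter_upwards [eventually_ge_atTop 1] with n hn
    gcongr
    calc (n : ℝ) ^ s ≤ (n : ℝ) ^ (⌈s⌉₊ : ℝ) :=
          rpow_le_rpow_of_exponent_le (by exact_mod_cast hn) (Nat.le_ceil s)
      _ = (n : ℝ) ^ ⌈s⌉₊ := rpow_natCast _ _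

theorem Finset.exists_prod_le_of_eventually_le_one {ι R : Type*} [CommSemiring R]
    [LinearOrder R] [IsStrictOrderedRing R] {f : ι → R} (hf0 : ∀ i, 0 ≤ f i)
    (hf : ∀ᶠ i in cofinite, f i ≤ 1) : ∃ C, 1 ≤ C ∧ ∀ s : Finset ι, ∏ i ∈ s, f i ≤ C := by
  classical
  set F := (eventually_cofinite.1 hf).toFinset
  refine ⟨∏ i ∈ F, max (f i) 1, one_le_prod fun i _ => le_max_right _ _, fun s => ?_⟩
  calc ∏ i ∈ s, f i ≤ ∏ i ∈ s, max (f i) 1 :=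
        prod_le_prod (fun i _ => hf0 i) fun i _ => le_max_left _ _
    _ ≤ ∏ i ∈ s ∪ F, max (f i) 1 :=
        prod_le_prod_of_subset_of_one_le subset_union_left
          (fun i _ => zero_le_one.trans (le_max_right _ _)) fun i _ _ => le_max_right _ _
    _ = ∏ i ∈ F, max (f i) 1 := by
        refine (prod_subset subset_union_right fun i _ hiF => ?_).symm
        simpa [F] using hiF

theorem tendsto_sum_Icc_atTop {u : ℕ → ℝ} (hu0 : ∀ i, 0 ≤ u i) (hu : Tendsto u atTop atTop) :
    Tendsto (fun n => ∑ i ∈ Finset.Icc 1 n, u i) atTop atTop := by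
  refine tendsto_atTop_mono' atTop ?_ hu
  filter_upwards [eventually_ge_atTop 1] with n hn
  exact Finset.single_le_sum (fun i _ => hu0 i) (Finset.mem_Icc.2 ⟨hn, le_rfl⟩)

theorem eventually_mul_add_le_mul_of_tendsto_div {α : Type*} {l : Filter α} {s T : α → ℝ}
    (hT : Tendsto T l atTop) (hsT : Tendsto (fun x => s x / T x) l (𝓝 0)) (a b : ℝ) {ε : ℝ}
    (hε : 0 < ε) : ∀ᶠ x in l, a * s x + b ≤ ε * T x := by
  have hlim : Tendsto (fun x => a * (s x / T x) + b * (T x)⁻¹) l (𝓝 0) := by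
    simpa using (hsT.const_mul a).add (hT.inv_tendsto_atTop.const_mul b)
  filter_upwards [hlim.eventually (eventually_lt_nhds hε), hT.eventually_gt_atTop 0]
    with x hx hTx
  rw [← div_le_iff₀ hTx]
  calc (a * s x + b) / T x = a * (s x / T x) + b * (T x)⁻¹ := by ring
    _ ≤ ε := hx.le

theorem stmt_19_general (l₀ l₁ l₂ c : ℝ) (h0 : 1 < l₀) (h01 : l₀ < l₁) (h12 : l₁ < l₂)
    (hc : 0 < c) (t : ℕ → ℕ)
    (htinf : Tendsto (fun i => t i) atTop atTop)
    (hratio : Tendsto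
      (fun ℓ => (t (ℓ + 1) : ℝ) / ∑ i ∈ Finset.Icc 1 ℓ, (t i : ℝ))
      atTop (nhds 0)) :
    ∀ᶠ ℓ in atTop,
      l₁ ^ ((1 + (t (ℓ + 1) : ℝ) / ∑ i ∈ Finset.Icc 1 ℓ, (t i : ℝ)) *
            ∑ i ∈ Finset.Icc 1 ℓ, (t i : ℝ)) *
          ∏ i ∈ Finset.Icc 1 (ℓ + 1),
            ((t i : ℝ) ^ ((5 : ℝ) / 2) / c * (l₀ / l₁) ^ (t i)) ≤
        l₂ ^ (∑ i ∈ Finset.Icc 1 ℓ, (t i : ℝ)) := by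
  have hl₀ : 0 < l₀ := by linarith
  have hl₁ : 0 < l₁ := by linarith
  have hl₂ : 0 < l₂ := by linarith
  set f : ℕ → ℝ := fun i => (t i : ℝ) ^ ((5 : ℝ) / 2) / c * (l₀ / l₁) ^ (t i)
  have hf : Tendsto f atTop (𝓝 0) := by
    simpa [f, div_mul_eq_mul_div] using ((tendsto_rpow_mul_pow_of_lt_one (5 / 2)
      (div_pos hl₀ hl₁).le ((div_lt_one hl₁).2 h01)).comp htinf).div_const c
  obtain ⟨C, hC, hfC⟩ := Finset.exists_prod_le_of_eventually_le_one (f := f)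
    (fun i => by positivity)
    (by simpa [Nat.cofinite_eq_atTop] using hf.eventually (eventually_le_nhds one_pos))
  have hT := tendsto_sum_Icc_atTop (fun i => Nat.cast_nonneg (t i))
    (tendsto_natCast_atTop_atTop.comp htinf)
  filter_upwards [eventually_mul_add_le_mul_of_tendsto_div hT hratio (log l₁) (log C)
    (log_pos ((one_lt_div hl₁).2 h12)), hT.eventually_gt_atTop 0] with ℓ hlog hTpos
  set T := ∑ i ∈ Finset.Icc 1 ℓ, (t i : ℝ)
  set s : ℝ := (t (ℓ + 1) : ℝ)
  have hsC : l₁ ^ s * C ≤ (l₂ / l₁) ^ T := by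
    rw [rpow_def_of_pos hl₁, rpow_def_of_pos (by positivity), ← exp_log (one_pos.trans_le hC), ← exp_add]
    exact exp_le_exp.2 hlog
  calc l₁ ^ ((1 + s / T) * T) * ∏ i ∈ Finset.Icc 1 (ℓ + 1), f i
      = l₁ ^ T * (l₁ ^ s * ∏ i ∈ Finset.Icc 1 (ℓ + 1), f i) := by
        rw [add_mul, div_mul_cancel₀ _ hTpos.ne', one_mul, rpow_add hl₁, mul_assoc]
    _ ≤ l₁ ^ T * (l₁ ^ s * C) := by gcongr; exact hfC _
    _ ≤ l₁ ^ T * (l₂ / l₁) ^ T := by gcongr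
    _ = l₂ ^ T := by rw [← mul_rpow hl₁.le (by positivity), mul_div_cancel₀ _ hl₁.ne']

theorem stmt_19 (l₀ l₁ l₂ c : ℝ) (h0 : 1 < l₀) (h01 : l₀ < l₁) (h12 : l₁ < l₂)
    (hc : 0 < c) (t : ℕ → ℕ) (ht : ∀ i, 0 < t i)
    (htinf : Tendsto (fun i => t i) atTop atTop)
    (hratio : Tendsto
      (fun ℓ => (t (ℓ + 1) : ℝ) / ∑ i ∈ Finset.Icc 1 ℓ, (t i : ℝ))
      atTop (nhds 0)) :
    ∀ᶠ ℓ in atTop,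
      l₁ ^ ((1 + (t (ℓ + 1) : ℝ) / ∑ i ∈ Finset.Icc 1 ℓ, (t i : ℝ)) *
            ∑ i ∈ Finset.Icc 1 ℓ, (t i : ℝ)) *
          ∏ i ∈ Finset.Icc 1 (ℓ + 1),
            ((t i : ℝ) ^ ((5 : ℝ) / 2) / c * (l₀ / l₁) ^ (t i)) ≤
        l₂ ^ (∑ i ∈ Finset.Icc 1 ℓ, (t i : ℝ)) :=
  stmt_19_general l₀ l₁ l₂ c h0 h01 h12 hc t htinf hratio
end
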